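/- Over the max-plus semiring, if A is a nonsingular n×n matrix over ℝ_max (per(A) > −∞), then for every k with 1 ≤ k ≤ n−1, per(A) + tr((A^∇)^{∧(n−k)}) ≥ tr(A^{∧k}), where tr denotes the tropical trace (maximum of the diagonal entries). -/

import Mathlib

open Matrix

noncomputable section

/-- The max-plus semiring `ℝ_max = ℝ ∪ {−∞}`: addition is `max` (the lattice `⊔`),
multiplication is `+` with `⊥ = −∞` absorbing. -/
abbrev Rmax : Type := WithBot ℝ

/-- Tropical matrix product: `(A ⊙ B) i j = max_t (A i t + B t j)`. -/
def tropMul {l m p : Type*} [Fintype m] (A : Matrix l m Rmax) (B : Matrix m p Rmax) :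
    Matrix l p Rmax :=
  Matrix.of fun i j => Finset.univ.sup fun t => A i t + B t j

/-- The tropical identity matrix: `0` on the diagonal, `−∞` elsewhere. -/
def tropId (m : Type*) [DecidableEq m] : Matrix m m Rmax :=
  Matrix.of fun i j => if i = j then (0 : Rmax) else ⊥

/-- Tropical permanent: maximum over permutations of the sum of the selected entries. -/
def tropPer {m : Type*} [Fintype m] [DecidableEq m] (A : Matrix m m Rmax) : Rmax :=
  Finset.univ.sup fun σ : Equiv.Perm m => ∑ i, A i (σ i)

/-- Tropical trace: maximum of the diagonal entries. -/
def tropTrace {m : Type*} [Fintype m] (A : Matrix m m Rmax) : Rmax :=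
  Finset.univ.sup fun i => A i i

/-- The type of `k`-element subsets of `{1,…,n}`. -/
abbrev KSub (n k : ℕ) : Type := {I : Finset (Fin n) // I.card = k}

/-- The `k`-th compound matrix: indexed by `k`-element subsets; the `(I,J)` entry is the
maximum over bijections `σ : I → J` of `∑_{i ∈ I} A i (σ i)`. -/
def compound {n : ℕ} (k : ℕ) (A : Matrix (Fin n) (Fin n) Rmax) :
    Matrix (KSub n k) (KSub n k) Rmax :=
  Matrix.of fun I J =>
    Finset.univ.sup fun σ : {x // x ∈ I.1} ≃ {x // x ∈ J.1} =>
      ∑ i : {x // x ∈ I.1}, A i.1 (σ i).1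

/-- Tropical adjoint: `adj(A) i j = per(A_{(j,i)})`, deleting row `j` and column `i`. -/
def tropAdj {n : ℕ} (A : Matrix (Fin (n+1)) (Fin (n+1)) Rmax) :
    Matrix (Fin (n+1)) (Fin (n+1)) Rmax :=
  Matrix.of fun i j => tropPer (A.submatrix j.succAbove i.succAbove)

/-- Quasi-inverse `A^∇` of a nonsingular matrix: `(A^∇) i j = adj(A) i j − per(A)`. -/
def tropQInv {n : ℕ} (A : Matrix (Fin (n+1)) (Fin (n+1)) Rmax) :
    Matrix (Fin (n+1)) (Fin (n+1)) Rmax :=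
  Matrix.of fun i j => tropAdj A i j + ((- (WithBot.unbotD 0 (tropPer A)) : ℝ) : Rmax)

/-- A matrix over `ℝ_max` is invertible iff it is a monomial (generalized permutation) matrix. -/
def IsMonomial {n : ℕ} (A : Matrix (Fin n) (Fin n) Rmax) : Prop :=
  ∃ (π : Equiv.Perm (Fin n)) (d : Fin n → ℝ),
    ∀ i j, A i j = if j = π i then ((d i : ℝ) : Rmax) else ⊥

/-- `m`-fold tropical power of a square matrix (`A^{⊙0}` is the tropical identity). -/
def tropPow {m : Type*} [Fintype m] [DecidableEq m] (A : Matrix m m Rmax) : ℕ → Matrix m m Rmax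
  | 0 => tropId m
  | k + 1 => tropMul (tropPow A k) A

/-!
The inequality holds entrywise: `A^{∧k}_{I,I} ≤ per A + (A^∇)^{∧(n+1-k)}_{Iᶜ,Iᶜ}`. Fix a bijection
`σ` of `I`, extended by the identity, and a permutation `π` attaining `per A`; put `C = Iᶜ` and
`ρ = π⁻¹ σ`. The first-return map `τ` of `ρ` on `C` permutes `C`, and cutting the `ρ`-orbits at
the points of `C` splits `I` into segments, one running from each `j ∈ C` to `τ j`. Following `σ`
on the segment of `j` and `π` elsewhere is a bijection from the rows other than `τ j` onto the
columns other than `j`, so its weight is at most `adj(A)_{j, τ j}`. Together these bijections use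
every entry of `σ` once and every entry of `π` exactly `|C| - 1` times, whence
`w(σ) + (|C| - 1) per A ≤ ∑_j adj(A)_{j, τ j} = ∑_j (A^∇)_{j, τ j} + |C| per A`.
-/

open Finset

lemma Fintype.sum_ite_eq_add_card_nsmul {ι M : Type*} [Fintype ι] [DecidableEq ι]
    [AddCommMonoid M] (i₀ : ι) (w v : M) :
    ∑ i, (if i = i₀ then w else v) + v = w + Fintype.card ι • v := by
  have hcard : 0 < Fintype.card ι := Fintype.card_pos_iff.mpr ⟨i₀⟩
  have hrest : ∑ i ∈ univ.erase i₀, (if i = i₀ then w else v) = ∑ i ∈ univ.erase i₀, v :=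
    Finset.sum_congr rfl fun i hi => if_neg (ne_of_mem_erase hi)
  rw [← add_sum_erase univ _ (mem_univ i₀), if_pos rfl, hrest, sum_const,
    card_erase_of_mem (mem_univ _), card_univ, add_assoc, ← succ_nsmul, Nat.sub_add_cancel hcard]

namespace Equiv.Perm

variable {α : Type*} (ρ : Perm α)

section Piecewise

variable [DecidableEq α] {S : Finset α} {e : α}

lemma injOn_piecewise_id (hS : ∀ x ∈ S, ρ x ∈ S ∨ ρ x = e) :
    Set.InjOn (S.piecewise ρ id) {e}ᶜ := by
  intro x hx y hy hxy
  rw [Set.mem_compl_singleton_iff] at hx hy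
  by_cases hxS : x ∈ S <;> by_cases hyS : y ∈ S
  · rw [piecewise_eq_of_mem _ _ _ hxS, piecewise_eq_of_mem _ _ _ hyS] at hxy
    exact ρ.injective hxy
  · rw [piecewise_eq_of_mem _ _ _ hxS, piecewise_eq_of_notMem _ _ _ hyS, id_eq] at hxy
    rcases hS x hxS with h | h
    · exact absurd (hxy ▸ h) hyS
    · exact absurd (hxy ▸ h) hy
  · rw [piecewise_eq_of_notMem _ _ _ hxS, piecewise_eq_of_mem _ _ _ hyS, id_eq] at hxy
    rcases hS y hyS with h | h
    · exact absurd (hxy ▸ h) hxS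
    · exact absurd (hxy ▸ h) hx
  · rwa [piecewise_eq_of_notMem _ _ _ hxS, piecewise_eq_of_notMem _ _ _ hyS] at hxy

lemma piecewise_id_ne_apply {j : α} (hj : j ∉ S) (hjS : ρ j ∈ S ∨ ρ j = e) {x : α} (hx : x ≠ e) :
    S.piecewise ρ id x ≠ ρ j := by
  by_cases hxS : x ∈ S
  · rw [piecewise_eq_of_mem _ _ _ hxS]
    exact fun h => hj (ρ.injective h ▸ hxS)
  · rw [piecewise_eq_of_notMem _ _ _ hxS]
    rintro rfl
    exact hjS.elim hxS hx

end Piecewise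

variable (C : Finset α)

/-- The first point of `C` on the orbit `x, ρ x, ρ² x, …`; it is `x` itself if the orbit
avoids `C` (`sInf ∅ = 0`). -/
def nextIn (x : α) : α := (ρ ^ sInf {t | (ρ ^ t) x ∈ C}) x

lemma pow_apply_self (t : ℕ) (x : α) : (ρ ^ t) (ρ x) = (ρ ^ (t + 1)) x := by
  rw [pow_succ, mul_apply]

lemma nextIn_of_mem {x : α} (hx : x ∈ C) : ρ.nextIn C x = x := by
  rw [nextIn, Nat.sInf_eq_zero.mpr (Or.inl (by simpa using hx)), pow_zero, one_apply]

lemma nextIn_mem_iff {x : α} : ρ.nextIn C x ∈ C ↔ ∃ t, (ρ ^ t) x ∈ C :=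
  ⟨fun h => ⟨_, h⟩, fun h => Nat.sInf_mem h⟩

lemma nextIn_apply_of_notMem {x : α} (hx : x ∉ C) (h : ∃ t, (ρ ^ t) x ∈ C) :
    ρ.nextIn C (ρ x) = ρ.nextIn C x := by
  have hpos : 1 ≤ sInf {t | (ρ ^ t) x ∈ C} := by
    refine Nat.one_le_iff_ne_zero.mpr fun h0 => ?_
    rcases Nat.sInf_eq_zero.mp h0 with h0 | h0
    · exact hx (by simpa using h0)
    · exact Set.nonempty_iff_ne_empty.mp h h0
  have hshift := Nat.sInf_add (p := fun t => (ρ ^ t) x ∈ C) hpos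
  simp only [nextIn, pow_apply_self]
  rw [← hshift]

lemma injOn_nextIn_apply : Set.InjOn (fun j => ρ.nextIn C (ρ j)) C := by
  intro a ha b hb hab
  wlog hle : sInf {t | (ρ ^ t) (ρ a) ∈ C} ≤ sInf {t | (ρ ^ t) (ρ b) ∈ C} generalizing a b
  · exact (this hb ha hab.symm (le_of_not_ge hle)).symm
  set s := sInf {t | (ρ ^ t) (ρ a) ∈ C}
  set t := sInf {t | (ρ ^ t) (ρ b) ∈ C}
  have hab' : (ρ ^ (s + 1)) a = (ρ ^ (s + 1)) ((ρ ^ (t - s)) b) := by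
    rw [← mul_apply, ← pow_add, Nat.add_comm (s + 1), ← Nat.add_assoc, Nat.sub_add_cancel hle,
      ← pow_apply_self, ← pow_apply_self]
    exact hab
  have ha' : a = (ρ ^ (t - s)) b := (ρ ^ (s + 1)).injective hab'
  rcases Nat.eq_zero_or_pos (t - s) with hts | hts
  · simpa [hts] using ha'
  · have : t ≤ t - s - 1 := Nat.sInf_le (show (ρ ^ (t - s - 1)) (ρ b) ∈ C by
      rw [pow_apply_self, Nat.sub_add_cancel hts, ← ha']
      exact ha)
    omega

variable [Fintype α]

lemma nextIn_apply_mem {j : α} (hj : j ∈ C) : ρ.nextIn C (ρ j) ∈ C := by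
  refine (nextIn_mem_iff ρ C).mpr ⟨orderOf ρ - 1, ?_⟩
  rwa [pow_apply_self, Nat.sub_add_cancel (orderOf_pos ρ), pow_orderOf_eq_one, one_apply]

def firstReturn : Perm C :=
  Equiv.ofBijective (fun j => ⟨ρ.nextIn C (ρ j), ρ.nextIn_apply_mem C j.2⟩)
    (Finite.injective_iff_bijective.mp fun a b h =>
      Subtype.ext (ρ.injOn_nextIn_apply C a.2 b.2 (congrArg Subtype.val h)))

lemma coe_firstReturn_apply (j : C) : (ρ.firstReturn C j : α) = ρ.nextIn C (ρ j) := rfl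

variable [DecidableEq α] (j₀ : C)

def owner (x : α) : C :=
  if h : ρ.nextIn C x ∈ C then (ρ.firstReturn C).symm ⟨_, h⟩ else j₀

/-- The points strictly between `j` and `firstReturn j` on the `ρ`-orbit of `j`; the points
whose orbit avoids `C` are put into `segment j₀`. -/
def segment (j : C) : Finset α := {x | x ∉ C ∧ ρ.owner C j₀ x = j}

lemma mem_segment {j : C} {x : α} : x ∈ ρ.segment C j₀ j ↔ x ∉ C ∧ ρ.owner C j₀ x = j := by
  simp [segment]

lemma owner_apply_of_notMem {x : α} (hx : x ∉ C) : ρ.owner C j₀ (ρ x) = ρ.owner C j₀ x := by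
  by_cases h : ∃ t, (ρ ^ t) x ∈ C
  · simp only [owner, nextIn_apply_of_notMem ρ C hx h]
  · have h' : ¬ ∃ t, (ρ ^ t) (ρ x) ∈ C := fun ⟨t, ht⟩ => h ⟨t + 1, by rwa [← pow_apply_self]⟩
    rw [owner, owner, dif_neg (by rwa [nextIn_mem_iff]), dif_neg (by rwa [nextIn_mem_iff])]

lemma owner_eq_of_nextIn_eq {j : C} {x : α} (h : ρ.nextIn C x = ρ.firstReturn C j) :
    ρ.owner C j₀ x = j := by
  have hmem : ρ.nextIn C x ∈ C := h ▸ (ρ.firstReturn C j).2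
  rw [owner, dif_pos hmem, Equiv.symm_apply_eq]
  exact Subtype.ext h

lemma coe_firstReturn_owner {x : α} (h : ρ.nextIn C x ∈ C) :
    (ρ.firstReturn C (ρ.owner C j₀ x) : α) = ρ.nextIn C x := by
  rw [owner, dif_pos h, apply_symm_apply]

lemma apply_mem_segment_or_eq_firstReturn (j : C) {x : α}
    (hx : x = j ∨ x ∈ ρ.segment C j₀ j) :
    ρ x ∈ ρ.segment C j₀ j ∨ ρ x = ρ.firstReturn C j := by
  rw [mem_segment] at hx ⊢
  by_cases hy : ρ x ∈ C
  · right
    rcases hx with rfl | ⟨hxC, rfl⟩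
    · rw [coe_firstReturn_apply, nextIn_of_mem ρ C hy]
    · rw [coe_firstReturn_owner ρ C j₀ ((nextIn_mem_iff ρ C).mpr ⟨1, by simpa using hy⟩),
        ← nextIn_apply_of_notMem ρ C hxC ⟨1, by simpa using hy⟩, nextIn_of_mem ρ C hy]
  · left
    refine ⟨hy, ?_⟩
    rcases hx with rfl | ⟨hxC, rfl⟩
    · exact ρ.owner_eq_of_nextIn_eq C j₀ (coe_firstReturn_apply ρ C j).symm
    · exact ρ.owner_apply_of_notMem C j₀ hxC


lemma sum_ite_ne_firstReturn_add {M : Type*} [AddCommMonoid M] (u v : α → M) (x : α) :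
    ∑ j : C, (if x ≠ ρ.firstReturn C j then (ρ.segment C j₀ j).piecewise u v x else 0) + v x
      = (if x ∈ Cᶜ then u x else 0) + #C • v x := by
  by_cases hxC : x ∈ C
  · have hj : ∀ j : C, (if x ≠ ρ.firstReturn C j then (ρ.segment C j₀ j).piecewise u v x
        else 0) = if j = (ρ.firstReturn C).symm ⟨x, hxC⟩ then 0 else v x := by
      intro j
      by_cases h : (ρ.firstReturn C j : α) = x
      · rw [if_neg (not_not.2 h.symm), if_pos ((Equiv.eq_symm_apply _).2 (Subtype.ext h))]
      · rw [if_pos (Ne.symm h), if_neg fun h' => h (by rw [h', apply_symm_apply]),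
          piecewise_eq_of_notMem _ _ _ fun hs => ((ρ.mem_segment C j₀).1 hs).1 hxC]
    rw [Finset.sum_congr rfl fun j _ => hj j, Fintype.sum_ite_eq_add_card_nsmul,
      Fintype.card_coe, if_neg (notMem_compl.2 hxC)]
  · have hj : ∀ j : C, (if x ≠ ρ.firstReturn C j then (ρ.segment C j₀ j).piecewise u v x
        else 0) = if j = ρ.owner C j₀ x then u x else v x := by
      intro j
      rw [if_pos fun h : x = _ => hxC (h ▸ (ρ.firstReturn C j).2)]
      by_cases h : j = ρ.owner C j₀ x
      · rw [if_pos h, piecewise_eq_of_mem _ _ _ ((ρ.mem_segment C j₀).2 ⟨hxC, h.symm⟩)]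
      · rw [if_neg h, piecewise_eq_of_notMem _ _ _ fun hs => h ((ρ.mem_segment C j₀).1 hs).2.symm]
    rw [Finset.sum_congr rfl fun j _ => hj j, Fintype.sum_ite_eq_add_card_nsmul,
      Fintype.card_coe, if_pos (mem_compl.2 hxC)]

lemma sum_sum_erase_piecewise_add {M : Type*} [AddCommMonoid M] (u v : α → M) :
    ∑ j : C, ∑ x ∈ univ.erase (ρ.firstReturn C j : α), (ρ.segment C j₀ j).piecewise u v x
      + ∑ x, v x = ∑ x ∈ Cᶜ, u x + #C • ∑ x, v x := by
  simp_rw [← filter_ne', sum_filter]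
  rw [sum_comm, ← sum_add_distrib,
    Finset.sum_congr rfl fun x _ => ρ.sum_ite_ne_firstReturn_add C j₀ u v x, sum_add_distrib,
    sum_ite_mem, univ_inter, smul_sum]

end Equiv.Perm

section Tropical

variable {n : ℕ}

lemma sum_le_tropPer {m : Type*} [Fintype m] [DecidableEq m] (A : Matrix m m Rmax)
    (σ : Equiv.Perm m) : ∑ i, A i (σ i) ≤ tropPer A :=
  le_sup (f := fun σ : Equiv.Perm m => ∑ i, A i (σ i)) (mem_univ σ)

lemma exists_sum_eq_tropPer {m : Type*} [Fintype m] [DecidableEq m] (A : Matrix m m Rmax) :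
    ∃ σ : Equiv.Perm m, ∑ i, A i (σ i) = tropPer A := by
  obtain ⟨σ, -, hσ⟩ := exists_mem_eq_sup univ univ_nonempty fun σ : Equiv.Perm m =>
    ∑ i, A i (σ i)
  exact ⟨σ, hσ.symm⟩

lemma le_tropTrace {m : Type*} [Fintype m] (A : Matrix m m Rmax) (i : m) :
    A i i ≤ tropTrace A :=
  le_sup (f := fun i => A i i) (mem_univ i)

lemma sum_le_compound {k : ℕ} (A : Matrix (Fin n) (Fin n) Rmax) (I J : KSub n k)
    (σ : {x // x ∈ I.1} ≃ {x // x ∈ J.1}) :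
    ∑ i : {x // x ∈ I.1}, A i.1 (σ i).1 ≤ compound k A I J :=
  le_sup (f := fun σ : {x // x ∈ I.1} ≃ {x // x ∈ J.1} => ∑ i : {x // x ∈ I.1}, A i.1 (σ i).1)
    (mem_univ σ)

lemma sum_erase_le_tropAdj (A : Matrix (Fin (n+1)) (Fin (n+1)) Rmax) {a b : Fin (n+1)}
    {f : Fin (n+1) → Fin (n+1)} (hf : Set.InjOn f {a}ᶜ) (hb : ∀ x, x ≠ a → f x ≠ b) :
    ∑ x ∈ univ.erase a, A x (f x) ≤ tropAdj A b a := by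
  choose χ hχ using fun i => Fin.exists_succAbove_eq (hb _ (Fin.succAbove_ne a i))
  have hχ_inj : Function.Injective χ := fun i i' h => Fin.succAbove_right_injective <|
    hf (Fin.succAbove_ne a i) (Fin.succAbove_ne a i') (by rw [← hχ, ← hχ, h])
  rw [Fin.univ_succAbove n a, erase_cons, sum_map]
  calc ∑ i, A (a.succAbove i) (f (a.succAbove i))
      = ∑ i, A.submatrix a.succAbove b.succAbove i
          (Equiv.ofBijective χ hχ_inj.bijective_of_finite i) := by
        simp [hχ]
    _ ≤ tropAdj A b a := sum_le_tropPer _ _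

lemma tropAdj_eq_tropQInv_add {A : Matrix (Fin (n+1)) (Fin (n+1)) Rmax} {p : ℝ}
    (hp : tropPer A = p) (i j : Fin (n+1)) : tropAdj A i j = tropQInv A i j + p := by
  rw [tropQInv, of_apply, hp, WithBot.unbotD_coe, add_assoc, ← WithBot.coe_add, neg_add_cancel,
    WithBot.coe_zero, add_zero]

def KSub.compl {k : ℕ} (I : KSub n k) : KSub n (n - k) :=
  ⟨I.1ᶜ, by rw [card_compl, Fintype.card_fin, I.2]⟩

theorem sum_compl_add_card_nsmul_le_sum_tropAdj (A : Matrix (Fin (n+1)) (Fin (n+1)) Rmax)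
    (π σ : Equiv.Perm (Fin (n+1))) {C : Finset (Fin (n+1))} (hσ : ∀ j ∈ C, σ j = j) (j₀ : C) :
    ∑ x ∈ Cᶜ, A x (σ x) + #C • ∑ x, A x (π x)
      ≤ ∑ j : C, tropAdj A j ((π⁻¹ * σ).firstReturn C j) + ∑ x, A x (π x) := by
  set ρ := π⁻¹ * σ
  have hπρ : ∀ x, π (ρ x) = σ x := fun x => by simp [ρ]
  rw [← ρ.sum_sum_erase_piecewise_add C j₀]
  gcongr with j
  have hj : (j : Fin (n+1)) ∉ ρ.segment C j₀ j := fun h => ((ρ.mem_segment C j₀).1 h).1 j.2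
  calc ∑ x ∈ univ.erase _,
        (ρ.segment C j₀ j).piecewise (fun x => A x (σ x)) (fun x => A x (π x)) x
      = ∑ x ∈ univ.erase _, A x (π ((ρ.segment C j₀ j).piecewise ρ id x)) := by
        refine Finset.sum_congr rfl fun x _ => ?_
        by_cases hx : x ∈ ρ.segment C j₀ j <;> simp [hx, hπρ]
    _ ≤ tropAdj A j (ρ.firstReturn C j) := by
        refine sum_erase_le_tropAdj A (π.injective.comp_injOn (ρ.injOn_piecewise_id ?_))
          fun x hx => ?_
        · exact fun x hx => ρ.apply_mem_segment_or_eq_firstReturn C j₀ j (Or.inr hx)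
        · rw [← hσ j j.2, ← hπρ]
          exact π.injective.ne (ρ.piecewise_id_ne_apply hj
            (ρ.apply_mem_segment_or_eq_firstReturn C j₀ j (Or.inl rfl)) hx)

theorem compound_self_le_tropPer_add_compound_compl (A : Matrix (Fin (n+1)) (Fin (n+1)) Rmax)
    (hA : ⊥ < tropPer A) {k : ℕ} (hk : k ≤ n) (I : KSub (n+1) k) :
    compound k A I I ≤ tropPer A + compound (n + 1 - k) (tropQInv A) I.compl I.compl := by
  obtain ⟨p, hp⟩ := WithBot.ne_bot_iff_exists.mp hA.ne'
  obtain ⟨π, hπ⟩ := exists_sum_eq_tropPer A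
  obtain ⟨j₀, hj₀⟩ : I.compl.1.Nonempty := card_pos.mp (by rw [I.compl.2]; omega)
  refine Finset.sup_le fun σ _ => ?_
  set σ' := Equiv.Perm.ofSubtype σ
  have hσ' : ∀ j ∈ I.compl.1, σ' j = j := fun j hj =>
    Equiv.Perm.ofSubtype_apply_of_not_mem σ (mem_compl.1 hj)
  have key := sum_compl_add_card_nsmul_le_sum_tropAdj A π σ' hσ' ⟨j₀, hj₀⟩
  simp_rw [hπ, ← hp, tropAdj_eq_tropQInv_add hp.symm, sum_add_distrib, sum_const, card_univ,
    Fintype.card_coe, add_right_comm _ _ (p : Rmax), ← WithBot.coe_nsmul] at key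
  have key' := (WithBot.add_le_add_iff_right WithBot.coe_ne_bot).mp key
  calc ∑ i : {x // x ∈ I.1}, A i.1 (σ i).1
      = ∑ x ∈ I.compl.1ᶜ, A x (σ' x) := by
        simp only [KSub.compl, compl_compl, ← sum_coe_sort I.1, σ',
          Equiv.Perm.ofSubtype_apply_coe]
    _ ≤ ∑ j : {x // x ∈ I.compl.1}, tropQInv A j ((π⁻¹ * σ').firstReturn _ j) + p := key'
    _ ≤ compound (n + 1 - k) (tropQInv A) I.compl I.compl + p :=
        add_le_add (sum_le_compound _ _ _ _) le_rfl
    _ = tropPer A + compound (n + 1 - k) (tropQInv A) I.compl I.compl := by rw [add_comm, hp]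

end Tropical

theorem tropical_jacobi_trace_general {n : ℕ} (A : Matrix (Fin (n+1)) (Fin (n+1)) Rmax)
    (hA : ⊥ < tropPer A)
    (k : ℕ) (hk2 : k ≤ n) :
    tropTrace (compound k A) ≤
      tropPer A + tropTrace (compound (n + 1 - k) (tropQInv A)) :=
  Finset.sup_le fun I _ => (compound_self_le_tropPer_add_compound_compl A hA hk2 I).trans
    (add_le_add le_rfl (le_tropTrace _ _))

/-- for `A` nonsingular,
`per(A) + tr((A^∇)^{∧(n−k)}) ≥ tr(A^{∧k})`. -/
theorem tropical_jacobi_trace {n : ℕ} (A : Matrix (Fin (n+1)) (Fin (n+1)) Rmax)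
    (hA : ⊥ < tropPer A)
    (k : ℕ) (hk1 : 1 ≤ k) (hk2 : k ≤ n) :
    tropTrace (compound k A) ≤
      tropPer A + tropTrace (compound (n + 1 - k) (tropQInv A)) :=
  tropical_jacobi_trace_general A hA k hk2
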